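/- Under the family elliptical potential setting, suppose additionally that S is a nonempty finite set with |S| = n, that B★ ≥ 0 and β ≥ 0, and that for every i ∈ I and every m we are given a matrix D^i_m ∈ ℝ^{n×d} with tr(D^i_m · V^i_m · (D^i_m)ᵀ) ≤ n·β² and a function Ṽ^i_m : S → ℝ with |Ṽ^i_m(s')| ≤ B★ for all s' ∈ S. Then Σ_{i∈I} Σ_{m=1}^{M_i} n^i_m · Σ_{s'∈S} Ṽ^i_m(s') · (D^i_m · c^i_m)(s') ≤ B★ · n · β · √(2·d·|I|·T·log(1 + T/(λ·d))). -/

import Mathlib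

/-!
Cauchy–Schwarz in the geometry of `V = V^i_m` gives `(D c)(s')² ≤ ‖c‖²_{V⁻¹} ‖D_{s'}‖²_V`, and
`∑_{s'} ‖D_{s'}‖²_V = tr (D V Dᵀ) ≤ n β²`; so the `(i, m)` summand is at most
`B★ n β · n^i_m ‖c^i_m‖_{V⁻¹}`. Cauchy–Schwarz over all pairs `(i, m)` reduces the claim to the
elliptical potential bound `∑_m n^i_m ‖c^i_m‖²_{V⁻¹} ≤ 2 d log (1 + T / (λ d))` for each family.
There `t_m = n^i_m ‖c^i_m‖²_{V⁻¹} ≤ 1` gives `t_m ≤ 2 log (1 + t_m)`, the matrix determinant lemma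
gives `λ^d ∏_m (1 + t_m) = det V_{M+1}`, and AM–GM on the eigenvalues bounds this determinant by
`(tr V_{M+1} / d)^d ≤ (λ + τ_i / d)^d`, using `‖c‖ ≤ 1`.
-/

open Matrix

theorem Real.le_two_mul_log_one_add {t : ℝ} (h0 : 0 ≤ t) (h2 : t ≤ 2) :
    t ≤ 2 * Real.log (1 + t) := by
  refine le_trans ?_ (mul_le_mul_of_nonneg_left (Real.le_log_one_add_of_nonneg h0) zero_le_two)
  rw [mul_div_assoc', le_div_iff₀ (by linarith)]
  nlinarith

theorem Real.prod_le_sum_div_card_pow {ι : Type*} [Fintype ι] {z : ι → ℝ} (hz : ∀ i, 0 ≤ z i) :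
    ∏ i, z i ≤ ((∑ i, z i) / Fintype.card ι) ^ Fintype.card ι := by
  rcases isEmpty_or_nonempty ι with hι | hι
  · simp
  have amgm := Real.geom_mean_le_arith_mean Finset.univ (fun _ => 1) z (fun _ _ => zero_le_one)
    (by simp [Fintype.card_pos]) (fun i _ => hz i)
  simp only [Real.rpow_one, Finset.sum_const, Finset.card_univ, nsmul_eq_mul, mul_one,
    one_mul] at amgm
  have hprod : 0 ≤ ∏ i, z i := Finset.prod_nonneg fun i _ => hz i
  calc ∏ i, z i = ((∏ i, z i) ^ ((Fintype.card ι : ℝ)⁻¹)) ^ Fintype.card ι :=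
        (Real.rpow_inv_natCast_pow hprod Fintype.card_ne_zero).symm
    _ ≤ _ := pow_le_pow_left₀ (Real.rpow_nonneg hprod _) amgm _

theorem Real.sum_mul_sqrt_le_sqrt_mul_sqrt {α : Type*} (s : Finset α) {w x : α → ℝ}
    (hw : ∀ a ∈ s, 0 ≤ w a) (hx : ∀ a ∈ s, 0 ≤ x a) :
    ∑ a ∈ s, w a * √(x a) ≤ √(∑ a ∈ s, w a) * √(∑ a ∈ s, w a * x a) := by
  rw [← Real.sqrt_mul (Finset.sum_nonneg hw)]
  refine Real.le_sqrt_of_sq_le (Finset.sum_sq_le_sum_mul_sum_of_sq_le_mul s hw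
    (fun a ha => mul_nonneg (hw a ha) (hx a ha)) fun a ha => le_of_eq ?_)
  rw [mul_pow, Real.sq_sqrt (hx a ha)]
  ring

theorem Real.sum_sum_mul_sqrt_le_sqrt_mul_sqrt {α β : Type*} (s : Finset α) (t : α → Finset β)
    {w x : α → β → ℝ} (hw : ∀ a ∈ s, ∀ b ∈ t a, 0 ≤ w a b) (hx : ∀ a ∈ s, ∀ b ∈ t a, 0 ≤ x a b) :
    ∑ a ∈ s, ∑ b ∈ t a, w a b * √(x a b) ≤
      √(∑ a ∈ s, ∑ b ∈ t a, w a b) * √(∑ a ∈ s, ∑ b ∈ t a, w a b * x a b) := by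
  simp only [Finset.sum_sigma']
  exact Real.sum_mul_sqrt_le_sqrt_mul_sqrt _
    (fun p hp => hw _ (Finset.mem_sigma.1 hp).1 _ (Finset.mem_sigma.1 hp).2)
    (fun p hp => hx _ (Finset.mem_sigma.1 hp).1 _ (Finset.mem_sigma.1 hp).2)

namespace Matrix

variable {k S : Type*} [Fintype k] [Fintype S]

theorem det_add_vecMulVec {R : Type*} [CommRing R] [DecidableEq k] {A : Matrix k k R}
    (hA : IsUnit A.det) (u v : k → R) :
    (A + vecMulVec u v).det = A.det * (1 + v ⬝ᵥ A⁻¹ *ᵥ u) := by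
  rw [vecMulVec_eq Unit, det_add_replicateCol_mul_replicateRow hA, Matrix.mul_assoc,
    ← replicateCol_mulVec, det_unique (n := Unit)]
  rfl

theorem PosSemidef.det_le_trace_div_card_pow [DecidableEq k] {A : Matrix k k ℝ}
    (hA : A.PosSemidef) : A.det ≤ (A.trace / Fintype.card k) ^ Fintype.card k := by
  rw [hA.isHermitian.det_eq_prod_eigenvalues, hA.isHermitian.trace_eq_sum_eigenvalues]
  simpa using Real.prod_le_sum_div_card_pow hA.eigenvalues_nonneg

theorem PosSemidef.dotProduct_mulVec_sq_le {A : Matrix k k ℝ} (hA : A.PosSemidef)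
    (x y : k → ℝ) : (x ⬝ᵥ A *ᵥ y) ^ 2 ≤ (x ⬝ᵥ A *ᵥ x) * (y ⬝ᵥ A *ᵥ y) := by
  let _ := A.toSeminormedAddCommGroup hA
  let _ := A.toInnerProductSpace hA
  have h := real_inner_mul_inner_self_le x y
  change ((A *ᵥ y) ⬝ᵥ star x) * ((A *ᵥ y) ⬝ᵥ star x) ≤
    ((A *ᵥ x) ⬝ᵥ star x) * ((A *ᵥ y) ⬝ᵥ star y) at h
  simpa [sq, dotProduct_comm] using h

theorem PosDef.dotProduct_sq_le [DecidableEq k] {V : Matrix k k ℝ} (hV : V.PosDef)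
    (u c : k → ℝ) : (u ⬝ᵥ c) ^ 2 ≤ (c ⬝ᵥ V⁻¹ *ᵥ c) * (u ⬝ᵥ V *ᵥ u) := by
  have h := hV.inv.posSemidef.dotProduct_mulVec_sq_le c (V *ᵥ u)
  rwa [mulVec_mulVec, nonsing_inv_mul _ hV.det_pos.ne'.isUnit, one_mulVec, dotProduct_comm c,
    dotProduct_comm (V *ᵥ u)] at h

theorem PosDef.dotProduct_inv_mulVec_nonneg [DecidableEq k] {V : Matrix k k ℝ} (hV : V.PosDef)
    (c : k → ℝ) : 0 ≤ c ⬝ᵥ V⁻¹ *ᵥ c := by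
  simpa using hV.inv.posSemidef.dotProduct_mulVec_nonneg c

theorem trace_mul_mul_transpose (D : Matrix S k ℝ) (A : Matrix k k ℝ) :
    (D * A * Dᵀ).trace = ∑ s, D s ⬝ᵥ A *ᵥ D s := by
  refine Finset.sum_congr rfl fun s _ => ?_
  rw [diag_apply, mul_apply', dotProduct_mulVec]
  rfl

theorem PosDef.sum_mulVec_sq_le [DecidableEq k] {V : Matrix k k ℝ} (hV : V.PosDef)
    (D : Matrix S k ℝ) (c : k → ℝ) :
    ∑ s, (D *ᵥ c) s ^ 2 ≤ (c ⬝ᵥ V⁻¹ *ᵥ c) * (D * V * Dᵀ).trace := by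
  rw [trace_mul_mul_transpose, Finset.mul_sum]
  exact Finset.sum_le_sum fun s _ => hV.dotProduct_sq_le (D s) c

theorem PosDef.sum_mul_mulVec_le [DecidableEq k] {V : Matrix k k ℝ} (hV : V.PosDef)
    (D : Matrix S k ℝ) (c : k → ℝ) (f : S → ℝ) {B β : ℝ} (hB : 0 ≤ B) (hf : ∀ s, |f s| ≤ B)
    (hβ : 0 ≤ β) (hD : (D * V * Dᵀ).trace ≤ Fintype.card S * β ^ 2) :
    ∑ s, f s * (D *ᵥ c) s ≤ B * Fintype.card S * β * √(c ⬝ᵥ V⁻¹ *ᵥ c) := by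
  set w := D *ᵥ c
  set x := c ⬝ᵥ V⁻¹ *ᵥ c
  have hx : 0 ≤ x := hV.dotProduct_inv_mulVec_nonneg c
  have hcs : ∑ s, |w s| ≤ √(Fintype.card S) * √(∑ s, w s ^ 2) := by
    simpa using Real.sum_mul_le_sqrt_mul_sqrt Finset.univ (fun _ => 1) (fun s => |w s|)
  have hsq : ∑ s, w s ^ 2 ≤ x * (Fintype.card S * β ^ 2) :=
    (hV.sum_mulVec_sq_le D c).trans (mul_le_mul_of_nonneg_left hD hx)
  calc ∑ s, f s * w s ≤ ∑ s, B * |w s| := Finset.sum_le_sum fun s _ =>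
        (le_abs_self _).trans <| (abs_mul _ _).trans_le <|
          mul_le_mul_of_nonneg_right (hf s) (abs_nonneg _)
    _ ≤ B * (√(Fintype.card S) * √(x * (Fintype.card S * β ^ 2))) := by
        rw [← Finset.mul_sum]; gcongr; exact hcs.trans (by gcongr)
    _ = B * Fintype.card S * β * √x := by
        rw [Real.sqrt_mul hx, Real.sqrt_mul (Nat.cast_nonneg _), Real.sqrt_sq hβ]
        have := Real.mul_self_sqrt (Nat.cast_nonneg (α := ℝ) (Fintype.card S))
        linear_combination B * β * √x * this

end Matrix

structure IsGramSequence {k : Type*} [Fintype k] [DecidableEq k] (lam : ℝ) (M : ℕ) (n : ℕ → ℕ)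
    (c : ℕ → k → ℝ) (V : ℕ → Matrix k k ℝ) : Prop where
  one : V 1 = lam • 1
  succ : ∀ m, 1 ≤ m → m ≤ M → V (m + 1) = V m + (n m : ℝ) • vecMulVec (c m) (c m)

namespace IsGramSequence

variable {k : Type*} [Fintype k] [DecidableEq k] {lam : ℝ} {M : ℕ} {n : ℕ → ℕ}
  {c : ℕ → k → ℝ} {V : ℕ → Matrix k k ℝ}

theorem posDef (hV : IsGramSequence lam M n c V) (hlam : 0 < lam) {m : ℕ} (h1 : 1 ≤ m)
    (hm : m ≤ M + 1) : (V m).PosDef := by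
  induction m, h1 using Nat.le_induction with
  | base => rw [hV.one]; exact PosDef.one.smul hlam
  | succ m h1 ih =>
    rw [hV.succ m h1 (by omega)]
    have hc : (vecMulVec (c m) (c m)).PosSemidef := by
      simpa using posSemidef_vecMulVec_self_star (c m)
    exact (ih (by omega)).add_posSemidef (hc.smul (Nat.cast_nonneg _))

theorem det_succ (hV : IsGramSequence lam M n c V) (hlam : 0 < lam) {m : ℕ} (hm : m ≤ M) :
    (V (m + 1)).det =
      lam ^ Fintype.card k * ∏ j ∈ Finset.Icc 1 m, (1 + n j * (c j ⬝ᵥ (V j)⁻¹ *ᵥ c j)) := by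
  induction m with
  | zero => simp [hV.one]
  | succ m ih =>
    have hdet : IsUnit (V (m + 1)).det :=
      (hV.posDef hlam le_add_self (by omega)).det_pos.ne'.isUnit
    rw [hV.succ (m + 1) le_add_self hm, ← vecMulVec_smul, det_add_vecMulVec hdet, ih (by omega),
      Finset.prod_Icc_succ_top le_add_self, smul_dotProduct, smul_eq_mul]
    ring

theorem trace_succ_le (hV : IsGramSequence lam M n c V)
    (hc : ∀ m, 1 ≤ m → m ≤ M → c m ⬝ᵥ c m ≤ 1) {m : ℕ} (hm : m ≤ M) :
    (V (m + 1)).trace ≤ lam * Fintype.card k + ∑ j ∈ Finset.Icc 1 m, (n j : ℝ) := by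
  induction m with
  | zero => simp [hV.one]
  | succ m ih =>
    rw [hV.succ (m + 1) le_add_self hm, trace_add, trace_smul, trace_vecMulVec,
      Finset.sum_Icc_succ_top le_add_self, smul_eq_mul]
    have := mul_le_mul_of_nonneg_left (hc (m + 1) le_add_self hm) (Nat.cast_nonneg (n (m + 1)))
    linarith [ih (by omega)]

theorem prod_one_add_le_pow [Nonempty k] (hV : IsGramSequence lam M n c V) (hlam : 0 < lam)
    (hc : ∀ m, 1 ≤ m → m ≤ M → c m ⬝ᵥ c m ≤ 1) {T : ℝ}
    (hT : ∑ m ∈ Finset.Icc 1 M, (n m : ℝ) ≤ T) :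
    ∏ m ∈ Finset.Icc 1 M, (1 + n m * (c m ⬝ᵥ (V m)⁻¹ *ᵥ c m)) ≤
      (1 + T / (lam * Fintype.card k)) ^ Fintype.card k := by
  set d := Fintype.card k
  have hd : (0 : ℝ) < d := by exact_mod_cast Fintype.card_pos
  have hVM := (hV.posDef hlam le_add_self le_rfl).posSemidef
  have htrace : (V (M + 1)).trace / d ≤ lam * (1 + T / (lam * d)) := by
    rw [div_le_iff₀ hd]
    have := hV.trace_succ_le hc le_rfl
    field_simp
    linarith
  refine le_of_mul_le_mul_left ?_ (pow_pos hlam d)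
  calc _ = (V (M + 1)).det := (hV.det_succ hlam le_rfl).symm
    _ ≤ ((V (M + 1)).trace / d) ^ d := hVM.det_le_trace_div_card_pow
    _ ≤ (lam * (1 + T / (lam * d))) ^ d :=
        pow_le_pow_left₀ (div_nonneg hVM.trace_nonneg hd.le) htrace d
    _ = lam ^ d * (1 + T / (lam * d)) ^ d := mul_pow _ _ _

theorem sum_le_two_mul_log (hV : IsGramSequence lam M n c V) (hlam : 0 < lam)
    (hc : ∀ m, 1 ≤ m → m ≤ M → c m ⬝ᵥ c m ≤ 1)
    (hsmall : ∀ m, 1 ≤ m → m ≤ M → n m * (c m ⬝ᵥ (V m)⁻¹ *ᵥ c m) ≤ 1)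
    {T : ℝ} (hT : ∑ m ∈ Finset.Icc 1 M, (n m : ℝ) ≤ T) :
    ∑ m ∈ Finset.Icc 1 M, n m * (c m ⬝ᵥ (V m)⁻¹ *ᵥ c m) ≤
      2 * Fintype.card k * Real.log (1 + T / (lam * Fintype.card k)) := by
  rcases isEmpty_or_nonempty k with hk | hk
  · simp [dotProduct]
  set t : ℕ → ℝ := fun m => n m * (c m ⬝ᵥ (V m)⁻¹ *ᵥ c m)
  have ht : ∀ m ∈ Finset.Icc 1 M, 0 ≤ t m := fun m hm => by
    obtain ⟨h1, h2⟩ := Finset.mem_Icc.1 hm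
    exact mul_nonneg (Nat.cast_nonneg _)
      ((hV.posDef hlam h1 (by omega)).dotProduct_inv_mulVec_nonneg (c m))
  have hprod_pos : 0 < ∏ m ∈ Finset.Icc 1 M, (1 + t m) :=
    Finset.prod_pos fun m hm => by linarith [ht m hm]
  calc ∑ m ∈ Finset.Icc 1 M, t m ≤ ∑ m ∈ Finset.Icc 1 M, 2 * Real.log (1 + t m) :=
        Finset.sum_le_sum fun m hm => Real.le_two_mul_log_one_add (ht m hm)
          ((hsmall m (Finset.mem_Icc.1 hm).1 (Finset.mem_Icc.1 hm).2).trans one_le_two)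
    _ = 2 * Real.log (∏ m ∈ Finset.Icc 1 M, (1 + t m)) := by
        rw [Real.log_prod fun m hm => by linarith [ht m hm], Finset.mul_sum]
    _ ≤ 2 * Real.log ((1 + T / (lam * Fintype.card k)) ^ Fintype.card k) := by
        gcongr
        exact hV.prod_one_add_le_pow hlam hc hT
    _ = _ := by rw [Real.log_pow]; ring

end IsGramSequence

theorem family_elliptical_potential_values_general {ι : Type*} [Fintype ι]
    {S : Type*} [Fintype S]
    {d nn : ℕ} (hcard : Fintype.card S = nn)
    (lam : ℝ) (hlam : 1 ≤ lam)
    (M : ι → ℕ) (c : ι → ℕ → Fin d → ℝ) (n : ι → ℕ → ℕ)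
    (V : ι → ℕ → Matrix (Fin d) (Fin d) ℝ)
    (hc : ∀ i m, 1 ≤ m → m ≤ M i → Real.sqrt (∑ k, c i m k ^ 2) ≤ 1)
    (hV1 : ∀ i, V i 1 = lam • (1 : Matrix (Fin d) (Fin d) ℝ))
    (hVrec : ∀ i m, 1 ≤ m → m ≤ M i →
      V i (m + 1) = V i m + (n i m : ℝ) • vecMulVec (c i m) (c i m))
    (hsmall : ∀ i m, 1 ≤ m → m ≤ M i →
      (n i m : ℝ) * (c i m ⬝ᵥ (V i m)⁻¹.mulVec (c i m)) ≤ 1)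
    (T : ℝ) (hT : T = ∑ i, ∑ m ∈ Finset.Icc 1 (M i), (n i m : ℝ))
    (Bstar β : ℝ) (hB : 0 ≤ Bstar) (hβ : 0 ≤ β)
    (D : ι → ℕ → Matrix S (Fin d) ℝ)
    (hD : ∀ i m, 1 ≤ m → m ≤ M i →
      (D i m * V i m * (D i m)ᵀ).trace ≤ nn * β ^ 2)
    (Vt : ι → ℕ → S → ℝ)
    (hVt : ∀ i m, 1 ≤ m → m ≤ M i → ∀ s', |Vt i m s'| ≤ Bstar) :
    ∑ i, ∑ m ∈ Finset.Icc 1 (M i),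
        (n i m : ℝ) * ∑ s', Vt i m s' * (D i m).mulVec (c i m) s' ≤
      Bstar * nn * β *
        Real.sqrt (2 * d * (Fintype.card ι) * T * Real.log (1 + T / (lam * d))) := by
  subst hcard
  have hgram i : IsGramSequence lam (M i) (n i) (c i) (V i) := ⟨hV1 i, hVrec i⟩
  have hpos i m (h1 : 1 ≤ m) (h2 : m ≤ M i) : (V i m).PosDef :=
    (hgram i).posDef (by linarith) h1 (by omega)
  set K := Bstar * Fintype.card S * β
  set L := Real.log (1 + T / (lam * d))
  set x : ι → ℕ → ℝ := fun i m => c i m ⬝ᵥ (V i m)⁻¹ *ᵥ c i m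
  have hτ i : ∑ m ∈ Finset.Icc 1 (M i), (n i m : ℝ) ≤ T :=
    hT ▸ Finset.single_le_sum (f := fun j => ∑ m ∈ Finset.Icc 1 (M j), (n j m : ℝ))
      (fun j _ => by positivity) (Finset.mem_univ i)
  have hpotential i : ∑ m ∈ Finset.Icc 1 (M i), n i m * x i m ≤ 2 * d * L := by
    simpa using (hgram i).sum_le_two_mul_log (by linarith)
      (fun m h1 h2 => by simpa [dotProduct, sq] using hc i m h1 h2) (hsmall i) (hτ i)
  calc _ ≤ ∑ i, ∑ m ∈ Finset.Icc 1 (M i), K * (n i m * √(x i m)) := by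
        refine Finset.sum_le_sum fun i _ => Finset.sum_le_sum fun m hm => ?_
        obtain ⟨h1, h2⟩ := Finset.mem_Icc.1 hm
        have := (hpos i m h1 h2).sum_mul_mulVec_le _ (c i m) _ hB (hVt i m h1 h2) hβ (hD i m h1 h2)
        exact (mul_le_mul_of_nonneg_left this (Nat.cast_nonneg _)).trans_eq (by ring)
    _ = K * ∑ i, ∑ m ∈ Finset.Icc 1 (M i), n i m * √(x i m) := by simp only [Finset.mul_sum]
    _ ≤ K * (√T * √(∑ i, ∑ m ∈ Finset.Icc 1 (M i), n i m * x i m)) := by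
        rw [hT]
        gcongr
        exact Real.sum_sum_mul_sqrt_le_sqrt_mul_sqrt _ _ (fun _ _ _ _ => by positivity)
          fun i _ m hm => (hpos i m (Finset.mem_Icc.1 hm).1 (Finset.mem_Icc.1 hm).2)
            |>.dotProduct_inv_mulVec_nonneg _
    _ ≤ K * (√T * √(Fintype.card ι * (2 * d * L))) := by
        gcongr
        exact (Finset.sum_le_sum fun i _ => hpotential i).trans_eq (by simp)
    _ = _ := by
        rw [← Real.sqrt_mul (hT ▸ by positivity)]
        ring_nf

/-- Family elliptical potential lemma with value functions: if
`tr(D^i_m V^i_m (D^i_m)ᵀ) ≤ n β²` and `|Ṽ^i_m(s')| ≤ B★`, then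
`∑_i ∑_m n^i_m ∑_{s'} Ṽ^i_m(s') (D^i_m c^i_m)(s') ≤ B★ n β √(2 d |I| T log (1 + T/(λ d)))`. -/
theorem family_elliptical_potential_values {ι : Type*} [Fintype ι] [Nonempty ι]
    {S : Type*} [Fintype S] [Nonempty S]
    {d nn : ℕ} (hd : 1 ≤ d) (hcard : Fintype.card S = nn)
    (lam : ℝ) (hlam : 1 ≤ lam)
    (M : ι → ℕ) (c : ι → ℕ → Fin d → ℝ) (n : ι → ℕ → ℕ)
    (V : ι → ℕ → Matrix (Fin d) (Fin d) ℝ)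
    (hc : ∀ i m, 1 ≤ m → m ≤ M i → Real.sqrt (∑ k, c i m k ^ 2) ≤ 1)
    (hV1 : ∀ i, V i 1 = lam • (1 : Matrix (Fin d) (Fin d) ℝ))
    (hVrec : ∀ i m, 1 ≤ m → m ≤ M i →
      V i (m + 1) = V i m + (n i m : ℝ) • vecMulVec (c i m) (c i m))
    (hsmall : ∀ i m, 1 ≤ m → m ≤ M i →
      (n i m : ℝ) * (c i m ⬝ᵥ (V i m)⁻¹.mulVec (c i m)) ≤ 1)
    (T : ℝ) (hT : T = ∑ i, ∑ m ∈ Finset.Icc 1 (M i), (n i m : ℝ))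
    (Bstar β : ℝ) (hB : 0 ≤ Bstar) (hβ : 0 ≤ β)
    (D : ι → ℕ → Matrix S (Fin d) ℝ)
    (hD : ∀ i m, 1 ≤ m → m ≤ M i →
      (D i m * V i m * (D i m)ᵀ).trace ≤ nn * β ^ 2)
    (Vt : ι → ℕ → S → ℝ)
    (hVt : ∀ i m, 1 ≤ m → m ≤ M i → ∀ s', |Vt i m s'| ≤ Bstar) :
    ∑ i, ∑ m ∈ Finset.Icc 1 (M i),
        (n i m : ℝ) * ∑ s', Vt i m s' * (D i m).mulVec (c i m) s' ≤
      Bstar * nn * β *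
        Real.sqrt (2 * d * (Fintype.card ι) * T * Real.log (1 + T / (lam * d))) :=
  family_elliptical_potential_values_general hcard lam hlam M c n V hc hV1 hVrec hsmall T hT Bstar β
    hB hβ D hD Vt hVt
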